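/- arXiv:1003.2139 — 4 statements merged into one kernel-verified Lean document; each statement's English description precedes it below -/
import Mathlib

section
/- Let S₋ and S₊ be real symmetric n×n matrices such that D := S₊ − S₋ is positive semidefinite, and let X, Y ∈ ℝⁿ satisfy, for every k ∈ ℝⁿ, ⟨Y, k⟩ ≤ (1/2)(⟨S₊k, k⟩ + ⟨S₊X, X⟩ − ⟨S₋(X−k), X−k⟩). Then ‖Y − (2S₋ − S₊)X‖ ≤ 2·√‖D‖·√⟨DX, X⟩, and moreover ‖Y − (2S₋ − S₊)X‖ ≤ 2‖D‖·‖P X‖, where P is the orthogonal projection of ℝⁿ onto the range of D. (This is the linear-algebra content of the paper's Theorem comparing contingent cones of weak KAM pseudographs of u₋ with the Green bundles, with S₋, S₊ the matrices of G₋, G₊.) -/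
/-!
Write `D = S₊ - S₋` and `Z = Y - (2S₋ - S₊)X`. Testing the hypothesis at `k = u - X` and at
`k = X` and subtracting, the symmetry of `S₋` and `S₊` leaves the bound
`⟪Z, u⟫ ≤ 2⟪DX, X⟫ + ⟪Du, u⟫ / 2` for every `u`. Along the line `u = tZ` this is a quadratic
inequality in `t`; its discriminant gives `‖Z‖² ≤ 4‖D‖⟪DX, X⟫`. Finally `X - PX` lies in
`(range D)ᗮ = ker D`, so `⟪DX, X⟫ = ⟪D(PX), PX⟫ ≤ ‖D‖‖PX‖²`.
-/

open Matrix RealInnerProductSpace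

section InnerProductSpace

variable {E : Type*} [NormedAddCommGroup E] [InnerProductSpace ℝ E]

theorem inner_sub_le_of_forall_inner_le {A B : E →ₗ[ℝ] E} (hA : A.IsSymmetric)
    (hB : B.IsSymmetric) {X Y : E}
    (h : ∀ k, ⟪Y, k⟫ ≤ 1 / 2 * (⟪B k, k⟫ + ⟪B X, X⟫ - ⟪A (X - k), X - k⟫)) (u : E) :
    ⟪Y - ((2 : ℝ) • A - B) X, u⟫ ≤ 2 * ⟪(B - A) X, X⟫ + ⟪(B - A) u, u⟫ / 2 := by
  have hu := h (u - X)
  have hX := h X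
  rw [show X - (u - X) = (2 : ℝ) • X - u by module] at hu
  rw [sub_self] at hX
  simp only [LinearMap.sub_apply, LinearMap.smul_apply, map_sub, map_smul, map_zero,
    inner_sub_left, inner_sub_right, inner_smul_left, inner_smul_right, inner_zero_right,
    conj_trivial] at hu hX ⊢
  have hAX : ⟪A u, X⟫ = ⟪A X, u⟫ := by rw [hA u X, real_inner_comm]
  have hBX : ⟪B u, X⟫ = ⟪B X, u⟫ := by rw [hB u X, real_inner_comm]
  linarith

theorem real_inner_map_self_le (T : E →L[ℝ] E) (u : E) : ⟪T u, u⟫ ≤ ‖T‖ * ‖u‖ ^ 2 :=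
  calc ⟪T u, u⟫ ≤ ‖T u‖ * ‖u‖ := real_inner_le_norm _ _
    _ ≤ ‖T‖ * ‖u‖ * ‖u‖ := by gcongr; exact T.le_opNorm u
    _ = ‖T‖ * ‖u‖ ^ 2 := by ring

theorem sq_norm_le_of_forall_inner_le (T : E →L[ℝ] E) {c : ℝ} {z : E}
    (h : ∀ u, ⟪z, u⟫ ≤ c + ⟪T u, u⟫ / 2) : ‖z‖ ^ 2 ≤ 2 * ‖T‖ * c := by
  have hc : 0 ≤ c := by simpa using h 0
  have hquad : ∀ t : ℝ, 0 ≤ (‖T‖ * ‖z‖ ^ 2 / 2) * (t * t) + (-‖z‖ ^ 2) * t + c := by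
    intro t
    have hzt := h (t • z)
    have hT := real_inner_map_self_le T (t • z)
    rw [inner_smul_right, real_inner_self_eq_norm_sq] at hzt
    rw [norm_smul, mul_pow, Real.norm_eq_abs, sq_abs] at hT
    nlinarith
  have hdisc := discrim_le_zero hquad
  rw [discrim] at hdisc
  nlinarith [mul_nonneg (norm_nonneg T) hc]

end InnerProductSpace

theorem LinearMap.IsSymmetric.inner_map_starProjection_range {𝕜 E : Type*} [RCLike 𝕜]
    [NormedAddCommGroup E] [InnerProductSpace 𝕜 E] {T : E →ₗ[𝕜] E} (hT : T.IsSymmetric)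
    [(LinearMap.range T).HasOrthogonalProjection] (x : E) :
    inner 𝕜 (T ((LinearMap.range T).starProjection x)) ((LinearMap.range T).starProjection x) =
      inner 𝕜 (T x) x := by
  set p := (LinearMap.range T).starProjection x
  have hker : T (x - p) = 0 := by
    rw [← LinearMap.mem_ker, ← hT.orthogonal_range]
    exact Submodule.sub_starProjection_mem_orthogonal x
  have hTp : T p = T x := by rwa [map_sub, sub_eq_zero, eq_comm] at hker
  rw [hTp, hT x p, hTp, ← hT x x]

theorem Matrix.IsSymm.isSymmetric_toEuclideanLin {n : Type*} [Fintype n] [DecidableEq n]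
    {A : Matrix n n ℝ} (hA : A.IsSymm) : A.toEuclideanLin.IsSymmetric :=
  isSymmetric_toEuclideanLin_iff.mpr (isHermitian_iff_isSymm.mpr hA)

theorem stmt_0_general {n : ℕ} (Sm Sp : Matrix (Fin n) (Fin n) ℝ)
    (hSm : Sm.IsSymm) (hSp : Sp.IsSymm)
    (X Y : EuclideanSpace ℝ (Fin n))
    (h : ∀ k : EuclideanSpace ℝ (Fin n),
      ⟪Y, k⟫ ≤ (1 / 2) * (⟪Matrix.toEuclideanLin Sp k, k⟫
        + ⟪Matrix.toEuclideanLin Sp X, X⟫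
        - ⟪Matrix.toEuclideanLin Sm (X - k), X - k⟫)) :
    ‖Y - Matrix.toEuclideanLin ((2 : ℝ) • Sm - Sp) X‖
      ≤ 2 * Real.sqrt ‖Matrix.toEuclideanCLM (𝕜 := ℝ) (Sp - Sm)‖
          * Real.sqrt ⟪Matrix.toEuclideanLin (Sp - Sm) X, X⟫ ∧
    ‖Y - Matrix.toEuclideanLin ((2 : ℝ) • Sm - Sp) X‖
      ≤ 2 * ‖Matrix.toEuclideanCLM (𝕜 := ℝ) (Sp - Sm)‖
          * ‖(Submodule.orthogonalProjectionOnto (LinearMap.range (Matrix.toEuclideanLin (Sp - Sm))) X :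
              EuclideanSpace ℝ (Fin n))‖ := by
  set D := Matrix.toEuclideanCLM (𝕜 := ℝ) (Sp - Sm)
  set Z := Y - Matrix.toEuclideanLin ((2 : ℝ) • Sm - Sp) X
  set q := ⟪Matrix.toEuclideanLin (Sp - Sm) X, X⟫
  have key (u) : ⟪Z, u⟫ ≤ 2 * q + ⟪D u, u⟫ / 2 := by
    have := inner_sub_le_of_forall_inner_le hSm.isSymmetric_toEuclideanLin
      hSp.isSymmetric_toEuclideanLin h u
    simp only [← map_smul, ← map_sub] at this
    exact this
  have hZ : ‖Z‖ ^ 2 ≤ 4 * ‖D‖ * q := by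
    linarith [sq_norm_le_of_forall_inner_le D key]
  have hsqrt : 2 * Real.sqrt ‖D‖ * Real.sqrt q = Real.sqrt (4 * ‖D‖ * q) := by
    rw [Real.sqrt_mul (by positivity), Real.sqrt_mul zero_le_four, show (4 : ℝ) = 2 ^ 2 by norm_num,
      Real.sqrt_sq zero_le_two]
  have hfirst : ‖Z‖ ≤ 2 * Real.sqrt ‖D‖ * Real.sqrt q := by
    rw [hsqrt]
    exact Real.le_sqrt_of_sq_le hZ
  refine ⟨hfirst, ?_⟩
  set PX := (LinearMap.range (Matrix.toEuclideanLin (Sp - Sm))).starProjection X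
  have hq : q ≤ ‖D‖ * ‖PX‖ ^ 2 :=
    calc q = ⟪D PX, PX⟫ :=
          ((hSp.sub hSm).isSymmetric_toEuclideanLin.inner_map_starProjection_range X).symm
      _ ≤ ‖D‖ * ‖PX‖ ^ 2 := real_inner_map_self_le D PX
  calc ‖Z‖ ≤ 2 * Real.sqrt ‖D‖ * Real.sqrt (‖D‖ * ‖PX‖ ^ 2) := hfirst.trans (by gcongr)
    _ = 2 * ‖D‖ * ‖PX‖ := by
        rw [Real.sqrt_mul (norm_nonneg _), Real.sqrt_sq (norm_nonneg _)]
        linear_combination 2 * ‖PX‖ * Real.mul_self_sqrt (norm_nonneg D)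

/-- linear-algebra content of the comparison between contingent cones of
weak KAM pseudographs of `u₋` and the Green bundles. -/
theorem stmt_0 {n : ℕ} (Sm Sp : Matrix (Fin n) (Fin n) ℝ)
    (hSm : Sm.IsSymm) (hSp : Sp.IsSymm)
    (hD : ∀ v : EuclideanSpace ℝ (Fin n), 0 ≤ ⟪Matrix.toEuclideanLin (Sp - Sm) v, v⟫)
    (X Y : EuclideanSpace ℝ (Fin n))
    (h : ∀ k : EuclideanSpace ℝ (Fin n),
      ⟪Y, k⟫ ≤ (1 / 2) * (⟪Matrix.toEuclideanLin Sp k, k⟫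
        + ⟪Matrix.toEuclideanLin Sp X, X⟫
        - ⟪Matrix.toEuclideanLin Sm (X - k), X - k⟫)) :
    ‖Y - Matrix.toEuclideanLin ((2 : ℝ) • Sm - Sp) X‖
      ≤ 2 * Real.sqrt ‖Matrix.toEuclideanCLM (𝕜 := ℝ) (Sp - Sm)‖
          * Real.sqrt ⟪Matrix.toEuclideanLin (Sp - Sm) X, X⟫ ∧
    ‖Y - Matrix.toEuclideanLin ((2 : ℝ) • Sm - Sp) X‖
      ≤ 2 * ‖Matrix.toEuclideanCLM (𝕜 := ℝ) (Sp - Sm)‖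
          * ‖(Submodule.orthogonalProjectionOnto (LinearMap.range (Matrix.toEuclideanLin (Sp - Sm))) X :
              EuclideanSpace ℝ (Fin n))‖ :=
  stmt_0_general Sm Sp hSm hSp X Y h
end

section
/- Let a, b, d be m×m real matrices with b invertible, and suppose the block upper-triangular 2m×2m matrix M = fromBlocks a b 0 d is symplectic. Define s⁺ := d·b⁻¹ and s⁻ := −b⁻¹·a, so that M = fromBlocks (−b·s⁻) b 0 (s⁺·b). Then s⁺ and s⁻ are symmetric, −s⁻·bᵀ·s⁺·b = 1, s⁺ is invertible, and b·s⁻·bᵀ = −(s⁺)⁻¹. -/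
open Matrix

/-- if `M = fromBlocks a b 0 d` is symplectic with `b` invertible, and
`s⁺ := d·b⁻¹`, `s⁻ := −b⁻¹·a`, then `M = fromBlocks (−b·s⁻) b 0 (s⁺·b)`, the matrices
`s⁺`, `s⁻` are symmetric, `−s⁻·bᵀ·s⁺·b = 1`, `s⁺` is invertible and `b·s⁻·bᵀ = −(s⁺)⁻¹`. -/
theorem stmt_7 {m : ℕ} (hm : 1 ≤ m) (a b d : Matrix (Fin m) (Fin m) ℝ) (hb : IsUnit b)
    (hM : (fromBlocks a b 0 d)ᵀ * fromBlocks (0 : Matrix (Fin m) (Fin m) ℝ) 1 (-1) 0 *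
        fromBlocks a b 0 d = fromBlocks 0 1 (-1) 0)
    (sp sm : Matrix (Fin m) (Fin m) ℝ) (hsp : sp = d * b⁻¹) (hsm : sm = -(b⁻¹ * a)) :
    sp.IsSymm ∧ sm.IsSymm ∧
    fromBlocks a b 0 d = fromBlocks (-(b * sm)) b 0 (sp * b) ∧
    -(sm * bᵀ * sp * b) = 1 ∧
    IsUnit sp ∧
    b * sm * bᵀ = -sp⁻¹ := by
  have hbd : IsUnit b.det := (Matrix.isUnit_iff_isUnit_det b).mp hb
  have hbi : b * b⁻¹ = 1 := Matrix.mul_nonsing_inv b hbd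
  have hib : b⁻¹ * b = 1 := Matrix.nonsing_inv_mul b hbd
  have hbtd : IsUnit bᵀ.det := by rwa [Matrix.det_transpose]
  have hbti : bᵀ * (bᵀ)⁻¹ = 1 := Matrix.mul_nonsing_inv _ hbtd
  have hibt : (bᵀ)⁻¹ * bᵀ = 1 := Matrix.nonsing_inv_mul _ hbtd
  rw [Matrix.fromBlocks_transpose, Matrix.fromBlocks_multiply, Matrix.fromBlocks_multiply,
    Matrix.fromBlocks_inj] at hM
  obtain ⟨h11, h12, h21, h22⟩ := hM
  simp only [Matrix.mul_zero, Matrix.zero_mul, Matrix.mul_one, Matrix.one_mul,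
    Matrix.mul_neg, Matrix.neg_mul, Matrix.transpose_zero, zero_add, add_zero,
    zero_mul, mul_zero, neg_zero] at h11 h12 h21 h22
  -- h12 : aᵀ * d = 1, h21 : -(dᵀ * a) = -1, h22 : -(dᵀ * b) + bᵀ * d = 0
  have hd1 : dᵀ * a = 1 := by have := h21; rwa [neg_inj] at this
  have hda : d * aᵀ = 1 := mul_eq_one_comm.mp h12
  have had : a * dᵀ = 1 := mul_eq_one_comm.mp hd1
  have hbd2 : bᵀ * d = dᵀ * b := by linear_combination (norm := noncomm_ring) h22
  have habt : a * bᵀ = b * aᵀ := by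
    calc a * bᵀ = a * bᵀ * (d * aᵀ) := by rw [hda, mul_one]
    _ = a * (bᵀ * d) * aᵀ := by noncomm_ring
    _ = a * (dᵀ * b) * aᵀ := by rw [hbd2]
    _ = (a * dᵀ) * (b * aᵀ) := by noncomm_ring
    _ = b * aᵀ := by rw [had, one_mul]
  have hspT : spᵀ = sp := by
    rw [hsp, Matrix.transpose_mul, Matrix.transpose_nonsing_inv]
    calc (bᵀ)⁻¹ * dᵀ = (bᵀ)⁻¹ * (dᵀ * b) * b⁻¹ := by rw [mul_assoc, mul_assoc, hbi, mul_one]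
    _ = (bᵀ)⁻¹ * (bᵀ * d) * b⁻¹ := by rw [hbd2]
    _ = ((bᵀ)⁻¹ * bᵀ) * (d * b⁻¹) := by noncomm_ring
    _ = d * b⁻¹ := by rw [hibt, one_mul]
  have hsmT : smᵀ = sm := by
    rw [hsm, Matrix.transpose_neg, Matrix.transpose_mul, Matrix.transpose_nonsing_inv, neg_inj]
    calc aᵀ * (bᵀ)⁻¹ = b⁻¹ * (b * aᵀ) * (bᵀ)⁻¹ := by rw [← mul_assoc b⁻¹ b aᵀ, hib, one_mul]
    _ = b⁻¹ * (a * bᵀ) * (bᵀ)⁻¹ := by rw [habt]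
    _ = (b⁻¹ * a) * (bᵀ * (bᵀ)⁻¹) := by noncomm_ring
    _ = b⁻¹ * a := by rw [hbti, mul_one]
  have hbsm : b * sm = -a := by
    rw [hsm, mul_neg, ← mul_assoc, hbi, one_mul]
  have hspb : sp * b = d := by rw [hsp, mul_assoc, hib, mul_one]
  have hspinv : sp * (b * aᵀ) = 1 := by
    rw [hsp, mul_assoc, ← mul_assoc b⁻¹, hib, one_mul, hda]
  have hspU : IsUnit sp := ⟨⟨sp, b * aᵀ, hspinv, mul_eq_one_comm.mp hspinv⟩, rfl⟩
  have hspI : sp⁻¹ = b * aᵀ := Matrix.inv_eq_right_inv hspinv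
  refine ⟨hspT, hsmT, ?_, ?_, hspU, ?_⟩
  · rw [hbsm, neg_neg, hspb]
  · calc -(sm * bᵀ * sp * b) = -(sm * bᵀ * (sp * b)) := by rw [mul_assoc]
    _ = -(sm * bᵀ * d) := by rw [hspb]
    _ = (b⁻¹ * a) * bᵀ * d := by rw [hsm]; noncomm_ring
    _ = b⁻¹ * (a * bᵀ) * d := by noncomm_ring
    _ = b⁻¹ * (b * aᵀ) * d := by rw [habt]
    _ = (b⁻¹ * b) * (aᵀ * d) := by noncomm_ring
    _ = 1 := by rw [hib, h12, one_mul]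
  · rw [hspI, ← habt, hbsm, neg_mul]
end

section
/- Let b, s⁻, s⁺ be m×m real matrices with s⁻ and s⁺ symmetric, s⁺ positive definite, and b·s⁻·bᵀ = −(s⁺)⁻¹. Let β > 0 and δ > 0, and assume −s⁻ ≤ β·1 (i.e. β·1 + s⁻ is positive semidefinite) and s⁺ ≤ (δ²/β)·1 (i.e. (δ²/β)·1 − s⁺ is positive semidefinite). Then for every v ∈ ℝᵐ, ‖bᵀv‖ ≥ (1/δ)·‖v‖. (Quantitative step in the paper's Lemma on the conorms m(bₙ(x)).) -/
/-!
With `u = (s⁺)⁻¹ v`, the identity `b s⁻ bᵀ = -(s⁺)⁻¹` gives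
`⟪u, v⟫ = -⟪s⁻ bᵀv, bᵀv⟫ ≤ β ‖bᵀv‖²`. On the other hand `0 ≤ s⁺ ≤ c` with `c = δ²/β` forces
`(s⁺)⁻¹ ≥ c⁻¹`, i.e. `‖v‖² ≤ c ⟪u, v⟫`; this comes from expanding `0 ≤ ⟪s⁺ x, x⟫` at
`x = c u - v`. Together, `‖v‖² ≤ δ² ‖bᵀv‖²`.
-/

open Matrix RealInnerProductSpace

theorem LinearMap.IsPositive.norm_sq_apply_le {E : Type*} [NormedAddCommGroup E]
    [InnerProductSpace ℝ E] {T : E →ₗ[ℝ] E} (hT : T.IsPositive) {c : ℝ} (hc : 0 < c)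
    (hTc : ∀ x, ⟪T x, x⟫ ≤ c * ‖x‖ ^ 2) (u : E) : ‖T u‖ ^ 2 ≤ c * ⟪T u, u⟫ := by
  have hTTu : ⟪T (T u), u⟫ = ‖T u‖ ^ 2 := by
    rw [hT.isSymmetric, real_inner_self_eq_norm_sq]
  have expand : ⟪T (c • u - T u), c • u - T u⟫
      = c ^ 2 * ⟪T u, u⟫ - 2 * c * ‖T u‖ ^ 2 + ⟪T (T u), T u⟫ := by
    simp only [map_sub, map_smul, inner_sub_left, inner_sub_right, real_inner_smul_left,
      real_inner_smul_right, real_inner_self_eq_norm_sq]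
    rw [real_inner_comm u, hTTu]
    ring
  nlinarith [hT.inner_nonneg_left (c • u - T u), hTc (T u)]

namespace Matrix

variable {n : Type*} [Fintype n] [DecidableEq n]

theorem IsSymm.posDef_of_inner_toEuclideanLin_pos {A : Matrix n n ℝ} (hA : A.IsSymm)
    (hpos : ∀ v : EuclideanSpace ℝ n, v ≠ 0 → 0 < ⟪toEuclideanLin A v, v⟫) : A.PosDef := by
  refine posDef_iff_dotProduct_mulVec.mpr ⟨by simpa [IsHermitian] using hA.eq, fun x hx => ?_⟩
  simpa [EuclideanSpace.inner_eq_star_dotProduct, dotProduct_comm] using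
    hpos (WithLp.toLp 2 x) (by simpa using hx)

theorem inner_toEuclideanLin_mul_mul_transpose (A B : Matrix n n ℝ) (v : EuclideanSpace ℝ n) :
    ⟪toEuclideanLin (A * B * Aᵀ) v, v⟫
      = ⟪toEuclideanLin B (toEuclideanLin Aᵀ v), toEuclideanLin Aᵀ v⟫ := by
  simp only [← coe_toEuclideanCLM_eq_toEuclideanLin, ContinuousLinearMap.coe_coe, map_mul,
    mul_apply_eq_comp, ← conjTranspose_eq_transpose_of_trivial, ← star_eq_conjTranspose,
    map_star]
  rw [ContinuousLinearMap.star_eq_adjoint, ContinuousLinearMap.adjoint_inner_right]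

end Matrix

theorem stmt_8_general {m : ℕ} (b sm sp : Matrix (Fin m) (Fin m) ℝ)
    (hsp : sp.IsSymm)
    (hposdef : ∀ v : EuclideanSpace ℝ (Fin m), v ≠ 0 → 0 < ⟪Matrix.toEuclideanLin sp v, v⟫)
    (hb : b * sm * bᵀ = -sp⁻¹)
    (β δ : ℝ) (hβ : 0 < β) (hδ : 0 < δ)
    (h1 : ∀ v : EuclideanSpace ℝ (Fin m),
      0 ≤ ⟪Matrix.toEuclideanLin (β • (1 : Matrix (Fin m) (Fin m) ℝ) + sm) v, v⟫)
    (h2 : ∀ v : EuclideanSpace ℝ (Fin m),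
      0 ≤ ⟪Matrix.toEuclideanLin ((δ ^ 2 / β) • (1 : Matrix (Fin m) (Fin m) ℝ) - sp) v, v⟫) :
    ∀ v : EuclideanSpace ℝ (Fin m), (1 / δ) * ‖v‖ ≤ ‖Matrix.toEuclideanLin bᵀ v‖ := by
  intro v
  have hPD := hsp.posDef_of_inner_toEuclideanLin_pos hposdef
  set w := toEuclideanLin bᵀ v
  set u := toEuclideanLin sp⁻¹ v
  have hu : toEuclideanLin sp u = v := by
    ext i
    simp [u, mulVec_mulVec, mul_nonsing_inv _ ((isUnit_iff_isUnit_det _).mp hPD.isUnit)]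
  have hsp_le (x : EuclideanSpace ℝ (Fin m)) : ⟪toEuclideanLin sp x, x⟫ ≤ δ ^ 2 / β * ‖x‖ ^ 2 := by
    simpa [inner_sub_left, real_inner_smul_left] using h2 x
  have hsm_ge : -(β * ‖w‖ ^ 2) ≤ ⟪toEuclideanLin sm w, w⟫ := by
    simpa [inner_add_left, real_inner_smul_left, neg_le_iff_add_nonneg'] using h1 w
  have hvu_le : ⟪v, u⟫ ≤ β * ‖w‖ ^ 2 :=
    calc ⟪v, u⟫ = ⟪toEuclideanLin sp⁻¹ v, v⟫ := real_inner_comm _ _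
      _ = -⟪toEuclideanLin sm w, w⟫ := by
        rw [← inner_toEuclideanLin_mul_mul_transpose, hb, map_neg, LinearMap.neg_apply,
          inner_neg_left, neg_neg]
      _ ≤ β * ‖w‖ ^ 2 := by linarith
  have hv_le : ‖v‖ ^ 2 ≤ (δ * ‖w‖) ^ 2 := by
    have key := (isPositive_toEuclideanLin_iff.mpr hPD.posSemidef).norm_sq_apply_le
      (by positivity) hsp_le u
    rw [hu] at key
    calc ‖v‖ ^ 2 ≤ δ ^ 2 / β * (β * ‖w‖ ^ 2) := key.trans (by gcongr)
      _ = (δ * ‖w‖) ^ 2 := by field_simp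
  rw [one_div, inv_mul_le_iff₀ hδ]
  exact (pow_le_pow_iff_left₀ (norm_nonneg _) (by positivity) two_ne_zero).mp hv_le

/-- quantitative lower bound on the conorm of `bᵀ`: if `s⁻`, `s⁺` are
symmetric, `s⁺` is positive definite, `b·s⁻·bᵀ = −(s⁺)⁻¹`, `−s⁻ ≤ β·1` and
`s⁺ ≤ (δ²/β)·1` with `β, δ > 0`, then `‖bᵀv‖ ≥ (1/δ)‖v‖` for every `v`. -/
theorem stmt_8 {m : ℕ} (b sm sp : Matrix (Fin m) (Fin m) ℝ)
    (hsm : sm.IsSymm) (hsp : sp.IsSymm)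
    (hposdef : ∀ v : EuclideanSpace ℝ (Fin m), v ≠ 0 → 0 < ⟪Matrix.toEuclideanLin sp v, v⟫)
    (hb : b * sm * bᵀ = -sp⁻¹)
    (β δ : ℝ) (hβ : 0 < β) (hδ : 0 < δ)
    (h1 : ∀ v : EuclideanSpace ℝ (Fin m),
      0 ≤ ⟪Matrix.toEuclideanLin (β • (1 : Matrix (Fin m) (Fin m) ℝ) + sm) v, v⟫)
    (h2 : ∀ v : EuclideanSpace ℝ (Fin m),
      0 ≤ ⟪Matrix.toEuclideanLin ((δ ^ 2 / β) • (1 : Matrix (Fin m) (Fin m) ℝ) - sp) v, v⟫) :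
    ∀ v : EuclideanSpace ℝ (Fin m), (1 / δ) * ‖v‖ ≤ ‖Matrix.toEuclideanLin bᵀ v‖ :=
  stmt_8_general b sm sp hsp hposdef hb β δ hβ hδ h1 h2
end

section
/- Let E be a real normed vector space, u : E → ℝ, K ≥ 0, and x, y ∈ E. Suppose p is a K-super-differential of u at x, and q is simultaneously a K-super-differential and a K-sub-differential of u at y. Then ‖p − q‖ ≤ 6K‖x − y‖, where ‖p − q‖ is the operator norm of the continuous linear functional p − q. (Paper's Lemma: Lipschitz estimate on derivatives along the contact set I(u₋, u₊), following Fathi's proof that the Aubry set is a Lipschitz graph.) -/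
/-!
Write `d = x - y`. Comparing `u (x + h)` with the sub-differential bound at `y` in direction
`h + d`, and `u x = u (y + d)` with the super-differential bound at `y`, the super-differential
bound at `x` gives `(q - p) h ≤ 2K (‖h‖² + ‖h‖‖d‖ + ‖d‖²)` for every `h`. Evaluating on the sphere
of radius `‖d‖` turns this into `‖q - p‖ ≤ 6K‖d‖`; when `d = 0` a sphere of any radius `t > 0`
gives `‖q - p‖ ≤ 2Kt`.
-/

open Filter Topology

section

variable {E : Type*} [NormedAddCommGroup E] [NormedSpace ℝ E]

def IsSuperdifferential (u : E → ℝ) (K : ℝ) (x : E) (p : E →L[ℝ] ℝ) : Prop :=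
  ∀ h : E, u (x + h) ≤ u x + p h + K * ‖h‖ ^ 2

def IsSubdifferential (u : E → ℝ) (K : ℝ) (x : E) (p : E →L[ℝ] ℝ) : Prop :=
  ∀ h : E, u x + p h - K * ‖h‖ ^ 2 ≤ u (x + h)

namespace ContinuousLinearMap

theorem opNorm_le_of_sphere_bound (f : E →L[ℝ] ℝ) {t M : ℝ} (ht : 0 < t) (hM : 0 ≤ M)
    (hf : ∀ v, ‖v‖ = t → f v ≤ M * t) : ‖f‖ ≤ M := by
  have unit_bound : ∀ v, ‖v‖ = 1 → f v ≤ M := fun v hv => by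
    have := hf (t • v) (by rw [norm_smul, hv, Real.norm_of_nonneg ht.le, mul_one])
    rw [map_smul, smul_eq_mul, mul_comm M] at this
    exact le_of_mul_le_mul_left this ht
  refine opNorm_le_of_unit_norm hM fun v hv => abs_le.2 ⟨?_, unit_bound v hv⟩
  have := unit_bound (-v) (by rwa [norm_neg])
  rw [map_neg] at this
  linarith

theorem opNorm_le_of_le_quadratic (f : E →L[ℝ] ℝ) {C r : ℝ} (hC : 0 ≤ C) (hr : 0 ≤ r)
    (hf : ∀ v, f v ≤ C * (‖v‖ ^ 2 + ‖v‖ * r + r ^ 2)) : ‖f‖ ≤ 3 * C * r := by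
  rcases hr.eq_or_lt with rfl | hr
  · have bound : ∀ t : ℝ, 0 < t → ‖f‖ ≤ C * t := fun t ht =>
      f.opNorm_le_of_sphere_bound ht (by positivity) fun v hv => by
        simpa [hv, sq, mul_assoc] using hf v
    have hlim : Tendsto (fun t : ℝ => C * t) (𝓝[>] 0) (𝓝 0) := by
      simpa using ((continuous_const_mul C).tendsto 0).mono_left nhdsWithin_le_nhds
    simpa using ge_of_tendsto hlim (eventually_nhdsWithin_of_forall bound)
  · refine f.opNorm_le_of_sphere_bound hr (by positivity) fun v hv => ?_
    calc f v ≤ C * (‖v‖ ^ 2 + ‖v‖ * r + r ^ 2) := hf v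
      _ = 3 * C * r * r := by rw [hv]; ring

end ContinuousLinearMap

theorem IsSuperdifferential.sub_apply_le {u : E → ℝ} {K : ℝ} {x y : E} {p q : E →L[ℝ] ℝ}
    (hK : 0 ≤ K) (hp : IsSuperdifferential u K x p) (hq_sup : IsSuperdifferential u K y q)
    (hq_sub : IsSubdifferential u K y q) (h : E) :
    (q - p) h ≤ 2 * K * (‖h‖ ^ 2 + ‖h‖ * ‖x - y‖ + ‖x - y‖ ^ 2) := by
  have at_x_plus_h := hq_sub (h + (x - y))
  have at_x := hq_sup (x - y)
  rw [show y + (h + (x - y)) = x + h by abel, map_add] at at_x_plus_h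
  rw [show y + (x - y) = x by abel] at at_x
  have hnorm : ‖h + (x - y)‖ ^ 2 ≤ (‖h‖ + ‖x - y‖) ^ 2 :=
    pow_le_pow_left₀ (norm_nonneg _) (norm_add_le _ _) 2
  rw [sub_apply]
  nlinarith [hp h, mul_le_mul_of_nonneg_left hnorm hK]

end

/-- if `p` is a `K`-super-differential of `u` at `x` and `q` is both a
`K`-super-differential and a `K`-sub-differential of `u` at `y`, then
`‖p − q‖ ≤ 6K‖x − y‖`. -/
theorem stmt_10 {E : Type*} [NormedAddCommGroup E] [NormedSpace ℝ E]
    (u : E → ℝ) (K : ℝ) (hK : 0 ≤ K) (x y : E) (p q : E →L[ℝ] ℝ)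
    (hp : ∀ h : E, u (x + h) ≤ u x + p h + K * ‖h‖ ^ 2)
    (hq_sup : ∀ h : E, u (y + h) ≤ u y + q h + K * ‖h‖ ^ 2)
    (hq_sub : ∀ h : E, u y + q h - K * ‖h‖ ^ 2 ≤ u (y + h)) :
    ‖p - q‖ ≤ 6 * K * ‖x - y‖ := by
  have contact_bound : ∀ h, (q - p) h ≤ 2 * K * (‖h‖ ^ 2 + ‖h‖ * ‖x - y‖ + ‖x - y‖ ^ 2) :=
    IsSuperdifferential.sub_apply_le hK hp hq_sup hq_sub
  calc ‖p - q‖ = ‖q - p‖ := norm_sub_rev p q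
    _ ≤ 3 * (2 * K) * ‖x - y‖ :=
      (q - p).opNorm_le_of_le_quadratic (by positivity) (norm_nonneg _) contact_bound
    _ = 6 * K * ‖x - y‖ := by ring
end
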